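/- arXiv:2306.01962 — 2 statements merged into one kernel-verified Lean document; each statement's English description precedes it below -/
import Mathlib

section
/- The coordinate ring ℂ[X,Y,S]/(S·X² − Y² + 1) is an integral domain. -/
open MvPolynomial

/-- The defining polynomial `S·X² − Y² + 1` of the universal centralizer of `SL₂(ℂ)`,
with `X = X 0`, `Y = X 1`, `S = X 2`. -/
noncomputable def Fpoly : MvPolynomial (Fin 3) ℂ :=
  X 2 * X 0 ^ 2 - X 1 ^ 2 + 1

private lemma primeX1 : Prime (X 1 : MvPolynomial (Fin 2) ℂ) := by
  let e : MvPolynomial (Fin 2) ℂ ≃ₐ[ℂ] Polynomial (MvPolynomial (Fin 1) ℂ) :=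
    (renameEquiv ℂ (Equiv.swap (0 : Fin 2) 1)).trans (finSuccEquiv ℂ 1)
  rw [← MulEquiv.prime_iff (p := (X 1 : MvPolynomial (Fin 2) ℂ)) e.toMulEquiv]
  have h : e.toMulEquiv (X 1) = Polynomial.X := by
    show e (X 1) = Polynomial.X
    simp [e, Equiv.swap_apply_right, finSuccEquiv_X_zero]
  rw [h]
  exact Polynomial.prime_X

private lemma X1_not_dvd : ¬ (X 1 : MvPolynomial (Fin 2) ℂ) ∣ (1 - X 0 ^ 2) := by
  intro h
  let φ : MvPolynomial (Fin 2) ℂ →ₐ[ℂ] Polynomial ℂ :=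
    aeval (fun i : Fin 2 => if i = 0 then Polynomial.X else 0)
  have h2 : φ (X 1) ∣ φ (1 - X 0 ^ 2) := map_dvd φ h
  have h3 : φ (X 1) = 0 := by simp [φ]
  have h4 : φ (1 - X 0 ^ 2) = 1 - Polynomial.X ^ 2 := by simp [φ]
  rw [h3, h4, zero_dvd_iff, sub_eq_zero] at h2
  have := congrArg (Polynomial.natDegree) h2
  simp [Polynomial.natDegree_X_pow] at this

/-- If `c` divides both `X1²` and `1 - X0²`, then `c` is a unit. -/
private lemma unit_of_dvd {c : MvPolynomial (Fin 2) ℂ}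
    (h1 : c ∣ (X 1 : MvPolynomial (Fin 2) ℂ) ^ 2) (h2 : c ∣ 1 - X 0 ^ 2) : IsUnit c := by
  by_contra hc
  have hc0 : c ≠ 0 := by
    rintro rfl
    rw [zero_dvd_iff] at h1
    exact pow_ne_zero 2 (X_ne_zero (R := ℂ) (1 : Fin 2)) h1
  obtain ⟨p, hpirr, hpc⟩ := WfDvdMonoid.exists_irreducible_factor hc hc0
  have hp : Prime p := (UniqueFactorizationMonoid.irreducible_iff_prime).mp hpirr
  have hpX : p ∣ X 1 := hp.dvd_of_dvd_pow (hpc.trans h1)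
  -- p is associated to X 1
  have hassoc := hpirr.associated_of_dvd primeX1.irreducible hpX
  exact X1_not_dvd (hassoc.symm.dvd.trans (hpc.trans h2))

private lemma irred_q :
    Irreducible (Polynomial.C ((X 1 : MvPolynomial (Fin 2) ℂ) ^ 2) * Polynomial.X +
      Polynomial.C (1 - X 0 ^ 2)) := by
  set a : MvPolynomial (Fin 2) ℂ := X 1 ^ 2 with ha
  set b : MvPolynomial (Fin 2) ℂ := 1 - X 0 ^ 2 with hb
  have ha0 : a ≠ 0 := pow_ne_zero 2 (X_ne_zero (R := ℂ) (1 : Fin 2))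
  have hdeg : (Polynomial.C a * Polynomial.X + Polynomial.C b).natDegree = 1 :=
    Polynomial.natDegree_linear ha0
  constructor
  · intro hu
    have := Polynomial.natDegree_eq_zero_of_isUnit hu
    omega
  · intro f g hfg
    have hne : Polynomial.C a * Polynomial.X + Polynomial.C b ≠ 0 := by
      intro h0
      rw [h0] at hdeg
      simp at hdeg
    have hf0 : f ≠ 0 := by rintro rfl; simp at hfg; exact hne hfg
    have hg0 : g ≠ 0 := by rintro rfl; simp at hfg; exact hne hfg
    have hdd : f.natDegree + g.natDegree = 1 := by
      rw [← Polynomial.natDegree_mul hf0 hg0, ← hfg, hdeg]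
    -- one of them has degree 0
    rcases Nat.eq_zero_or_pos f.natDegree with hfd | hfd
    · obtain ⟨c, rfl⟩ := Polynomial.natDegree_eq_zero.mp hfd
      left
      have h1 : c ∣ a := by
        have := congrArg (fun p => Polynomial.coeff p 1) hfg
        simp [Polynomial.coeff_C_mul] at this
        exact ⟨g.coeff 1, this⟩
      have h2 : c ∣ b := by
        have := congrArg (fun p => Polynomial.coeff p 0) hfg
        simp [Polynomial.coeff_C_mul, Polynomial.mul_coeff_zero] at this
        exact ⟨g.coeff 0, this⟩
      exact (unit_of_dvd h1 h2).map Polynomial.C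
    · rcases Nat.eq_zero_or_pos g.natDegree with hgd | hgd
      · obtain ⟨c, rfl⟩ := Polynomial.natDegree_eq_zero.mp hgd
        right
        have h1 : c ∣ a := by
          have := congrArg (fun p => Polynomial.coeff p 1) hfg
          simp [Polynomial.coeff_mul_C] at this
          exact ⟨f.coeff 1, by rw [this]; ring⟩
        have h2 : c ∣ b := by
          have := congrArg (fun p => Polynomial.coeff p 0) hfg
          simp [Polynomial.coeff_mul_C] at this
          exact ⟨f.coeff 0, by rw [this]; ring⟩
        exact (unit_of_dvd h1 h2).map Polynomial.C
      · omega

set_option synthInstance.maxHeartbeats 1000000 in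
private lemma primeF : Prime Fpoly := by
  let e : MvPolynomial (Fin 3) ℂ ≃ₐ[ℂ] Polynomial (MvPolynomial (Fin 2) ℂ) :=
    (renameEquiv ℂ (Equiv.swap (0 : Fin 3) 2)).trans (finSuccEquiv ℂ 2)
  rw [← MulEquiv.prime_iff (p := Fpoly) e.toMulEquiv]
  have h : e.toMulEquiv Fpoly =
      Polynomial.C ((X 1 : MvPolynomial (Fin 2) ℂ) ^ 2) * Polynomial.X +
        Polynomial.C (1 - X 0 ^ 2) := by
    show e Fpoly = _
    have h2 : ((2 : Fin 3) : Fin 3) = (1 : Fin 2).succ := rfl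
    have h1 : ((1 : Fin 3) : Fin 3) = (0 : Fin 2).succ := rfl
    simp only [Fpoly, e, AlgEquiv.trans_apply, map_add, map_sub, map_mul, map_pow, map_one,
      renameEquiv_apply, rename_X, Equiv.swap_apply_left, Equiv.swap_apply_right]
    rw [show Equiv.swap (0 : Fin 3) 2 1 = 1 from rfl]
    rw [h1, h2, finSuccEquiv_X_zero, finSuccEquiv_X_succ, finSuccEquiv_X_succ]
    ring
  rw [h]
  exact UniqueFactorizationMonoid.irreducible_iff_prime.mp irred_q

/-- The coordinate ring `ℂ[X,Y,S]/(S·X² − Y² + 1)` is an integral domain. -/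
theorem stmt3 : IsDomain (MvPolynomial (Fin 3) ℂ ⧸ Ideal.span {Fpoly}) := by
  have : (Ideal.span {Fpoly}).IsPrime :=
    (Ideal.span_singleton_prime primeF.ne_zero).mpr primeF
  exact Ideal.Quotient.isDomain _
end

section
/- The map φ : ℂ[X,Y,S]/(SX²−Y²+1) → ℂ[u^{±1}, b], X ↦ u⁻¹, Y ↦ −b u⁻¹, S ↦ b² + u², is a Poisson algebra homomorphism, where the source has the bracket {S,X}=Y, {S,Y}=SX, {X,Y}=−X²/2, and the target has the canonical bracket with {b, γ} = γ for γ = u², i.e. {b, u} = u/2 and {u, u} = {b, b} = 0. -/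
open MvPolynomial

/-- Images of the generators `X, Y, S` under the free field realization map
`φ : X ↦ u⁻¹, Y ↦ −b·u⁻¹, S ↦ b² + u²`, in `ℂ[u^{±1}, b]` realized as
`Polynomial (LaurentPolynomial ℂ)` with `u = C (T 1)` and `b = Polynomial.X`. -/
noncomputable def φX : Polynomial (LaurentPolynomial ℂ) :=
  Polynomial.C (LaurentPolynomial.T (-1))

noncomputable def φY : Polynomial (LaurentPolynomial ℂ) :=
  -(Polynomial.X * Polynomial.C (LaurentPolynomial.T (-1)))

noncomputable def φS : Polynomial (LaurentPolynomial ℂ) :=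
  Polynomial.X ^ 2 + Polynomial.C (LaurentPolynomial.T 2)

/-!
Everything reduces to the brackets of `b`, `u` and `v = u⁻¹`. Those involving `v` come from
applying the Leibniz rule to `v * u = 1`; this gives `{u, v} = 0` and then `{v, v} = 0` without
dividing by `2`. The three identities are then Leibniz expansions of `s = b² + u²` and `y = -b v`.
-/

section LeibnizBracket

variable {R A : Type*} [CommRing R] [CommRing A] [Algebra R A] {Q : A →ₗ[R] A →ₗ[R] A}

theorem bracket_mul_right (hanti : ∀ p q, Q p q = -Q q p)
    (hleib : ∀ p q r, Q (p * q) r = p * Q q r + q * Q p r) (p q r : A) :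
    Q r (p * q) = p * Q r q + q * Q r p := by
  rw [hanti r, hleib, hanti q, hanti p]
  ring

theorem bracket_one_left (hleib : ∀ p q r, Q (p * q) r = p * Q q r + q * Q p r) (r : A) :
    Q 1 r = 0 := by
  have h := hleib 1 1 r
  rw [one_mul, one_mul] at h
  linear_combination -h

theorem bracket_one_right (hanti : ∀ p q, Q p q = -Q q p)
    (hleib : ∀ p q r, Q (p * q) r = p * Q q r + q * Q p r) (r : A) : Q r 1 = 0 := by
  rw [hanti, bracket_one_left hleib, neg_zero]

theorem bracket_right_eq_of_mul_eq_one (hanti : ∀ p q, Q p q = -Q q p)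
    (hleib : ∀ p q r, Q (p * q) r = p * Q q r + q * Q p r) {u v : A} (hvu : v * u = 1)
    (r : A) : Q r v = -(v ^ 2 * Q r u) := by
  have h := bracket_mul_right hanti hleib v u r
  rw [hvu, bracket_one_right hanti hleib] at h
  linear_combination (-v) * h - Q r v * hvu

theorem bracket_sq_left (hleib : ∀ p q r, Q (p * q) r = p * Q q r + q * Q p r) (p r : A) :
    Q (p ^ 2) r = 2 * p * Q p r := by
  rw [sq, hleib]
  ring

theorem bracket_free_field_realization (hanti : ∀ p q, Q p q = -Q q p)
    (hleib : ∀ p q r, Q (p * q) r = p * Q q r + q * Q p r) {b u v : A} {c : R}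
    (hvu : v * u = 1) (hbu : Q b u = c • u) (huu : Q u u = 0) (hbb : Q b b = 0) :
    Q (b ^ 2 + u ^ 2) v = (2 * c) • -(b * v) ∧
      Q (b ^ 2 + u ^ 2) (-(b * v)) = (2 * c) • ((b ^ 2 + u ^ 2) * v) ∧
      Q v (-(b * v)) = -(c • v ^ 2) := by
  rw [Algebra.smul_def] at hbu
  simp only [Algebra.smul_def, map_mul, map_ofNat]
  set k := algebraMap R A c
  have hbv : Q b v = -(k * v) := by
    rw [bracket_right_eq_of_mul_eq_one hanti hleib hvu, hbu]
    linear_combination -(k * v) * hvu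
  have huv : Q u v = 0 := by
    rw [bracket_right_eq_of_mul_eq_one hanti hleib hvu, huu, mul_zero, neg_zero]
  have hvv : Q v v = 0 := by
    rw [bracket_right_eq_of_mul_eq_one hanti hleib hvu, hanti, huv, neg_zero, mul_zero,
      neg_zero]
  have hsv : Q (b ^ 2 + u ^ 2) v = 2 * k * -(b * v) := by
    rw [map_add, LinearMap.add_apply, bracket_sq_left hleib, bracket_sq_left hleib, hbv, huv]
    ring
  have hsb : Q (b ^ 2 + u ^ 2) b = 2 * k * -(u ^ 2) := by
    rw [map_add, LinearMap.add_apply, bracket_sq_left hleib, bracket_sq_left hleib, hbb,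
      hanti u, hbu]
    ring
  refine ⟨hsv, ?_, ?_⟩
  · rw [map_neg, bracket_mul_right hanti hleib, hsv, hsb]
    ring
  · rw [map_neg, bracket_mul_right hanti hleib, hvv, hanti v, hbv]
    ring

end LeibnizBracket

/-- The map `φ : X ↦ u⁻¹, Y ↦ −b·u⁻¹, S ↦ b² + u²` is a Poisson homomorphism:
for any `ℂ`-bilinear antisymmetric Leibniz bracket `Q` on `ℂ[u^{±1}, b]` with
`{b, u} = u/2` and `{u,u} = {b,b} = 0`, one has `{φ(S), φ(X)} = φ(Y)`,
`{φ(S), φ(Y)} = φ(S)·φ(X)` and `{φ(X), φ(Y)} = −φ(X)²/2`, matching the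
source bracket `{S,X} = Y`, `{S,Y} = S·X`, `{X,Y} = −X²/2`. -/
theorem stmt10
    (Q : Polynomial (LaurentPolynomial ℂ) →ₗ[ℂ]
        Polynomial (LaurentPolynomial ℂ) →ₗ[ℂ] Polynomial (LaurentPolynomial ℂ))
    (hanti : ∀ p q, Q p q = -Q q p)
    (hleib : ∀ p q r, Q (p * q) r = p * Q q r + q * Q p r)
    (hbu : Q Polynomial.X (Polynomial.C (LaurentPolynomial.T 1)) =
      ((1 : ℂ) / 2) • Polynomial.C (LaurentPolynomial.T 1))
    (huu : Q (Polynomial.C (LaurentPolynomial.T 1))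
      (Polynomial.C (LaurentPolynomial.T 1)) = 0)
    (hbb : Q Polynomial.X Polynomial.X = 0) :
    Q φS φX = φY ∧ Q φS φY = φS * φX ∧
      Q φX φY = -(((1 : ℂ) / 2) • (φX ^ 2)) := by
  have hvu : (Polynomial.C (LaurentPolynomial.T (-1)) : Polynomial (LaurentPolynomial ℂ)) *
      Polynomial.C (LaurentPolynomial.T 1) = 1 := by
    rw [← Polynomial.C_mul, ← LaurentPolynomial.T_add, neg_add_cancel, LaurentPolynomial.T_zero,
      Polynomial.C_1]
  have hφS : φS = Polynomial.X ^ 2 + Polynomial.C (LaurentPolynomial.T 1) ^ 2 := by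
    rw [φS, ← Polynomial.C_pow, LaurentPolynomial.T_pow]
    norm_num
  have h2c : 2 * ((1 : ℂ) / 2) = 1 := by norm_num
  obtain ⟨hsx, hsy, hxy⟩ := bracket_free_field_realization hanti hleib hvu hbu huu hbb
  rw [h2c, one_smul] at hsx hsy
  rw [hφS, φX, φY]
  exact ⟨hsx, hsy, hxy⟩
end
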